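/- Let F be a star forest in the graph A for which there exists a set C ⊆ V(A) \ {x,y} meeting each connected component of F in exactly one vertex and such that every edge of F is incident with a vertex of C (i.e., a choice of centers of F avoiding x and y). Then A − E(F) contains a subgraph isomorphic to K4. -/

import Mathlib

/-- The complete graph on four vertices. -/
def K4 : SimpleGraph (Fin 4) := ⊤

/-- `G` contains a subgraph isomorphic to the pattern graph `P`. -/
def ContainsSub {W V : Type*} (P : SimpleGraph W) (G : SimpleGraph V) : Prop :=
  ∃ f : W ↪ V, ∀ ⦃a b : W⦄, P.Adj a b → G.Adj (f a) (f b)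

/-- The graph `A`: three disjoint paths on 4 vertices (`Sum.inr (i, 0) - ⋯ - Sum.inr (i, 3)`
for `i : Fin 3`), together with two adjacent vertices `x = Sum.inl 0` and `y = Sum.inl 1`,
each adjacent to all 12 path vertices.  The edge `xy` is the handle of `A`. -/
def GA : SimpleGraph (Sum (Fin 2) (Fin 3 × Fin 4)) :=
  SimpleGraph.fromRel (fun a b =>
    (a = Sum.inl 0 ∧ b = Sum.inl 1) ∨
    ((a = Sum.inl 0 ∨ a = Sum.inl 1) ∧ ∃ p : Fin 3 × Fin 4, b = Sum.inr p) ∨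
    (∃ i : Fin 3, ∃ j : Fin 3, a = Sum.inr (i, j.castSucc) ∧ b = Sum.inr (i, j.succ)))

/-! Since `x` and `y` are not centers, each is joined in `F` only to centers, and a component of
`F` holds only one center; so `x` and `y` each have at most one `F`-neighbour, and some path
`Pᵢ` is missed by both. A star has no path with three edges, so some edge `uv` of `Pᵢ` is not
in `F`, and neither is `xy`; then `x, y, u, v` span a `K4` in `A − E(F)`. -/

open SimpleGraph

namespace SimpleGraph.Subgraph

variable {V : Type*} {G : SimpleGraph V}

structure IsCenterSet (F : G.Subgraph) (C : Set V) : Prop where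
  existsUnique_mem : ∀ K : F.coe.ConnectedComponent,
    ∃! v : F.verts, F.coe.connectedComponentMk v = K ∧ (v : V) ∈ C
  mem_or_mem : ∀ ⦃p q⦄, F.Adj p q → p ∈ C ∨ q ∈ C

variable {F : G.Subgraph} {C : Set V}

lemma IsCenterSet.eq_of_reachable (hC : F.IsCenterSet C) {u v : F.verts}
    (h : F.coe.Reachable u v) (hu : (u : V) ∈ C) (hv : (v : V) ∈ C) : u = v := by
  obtain ⟨w, -, huniq⟩ := hC.existsUnique_mem (F.coe.connectedComponentMk u)
  exact (huniq u ⟨rfl, hu⟩).trans (huniq v ⟨(ConnectedComponent.sound h).symm, hv⟩).symm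

lemma IsCenterSet.eq_of_adj_of_adj (hC : F.IsCenterSet C) {x : V} (hx : x ∉ C) ⦃u v : V⦄
    (hu : F.Adj x u) (hv : F.Adj x v) : u = v :=
  congrArg Subtype.val <| hC.eq_of_reachable (hu.symm.coe.reachable.trans hv.coe.reachable)
    ((hC.mem_or_mem hu).resolve_left hx) ((hC.mem_or_mem hv).resolve_left hx)

/-- The centers of the edges `ab` and `cd` would be two centers in one component. -/
lemma IsCenterSet.not_adj_of_adj_of_adj (hC : F.IsCenterSet C) {a b c d : V}
    (hab : F.Adj a b) (hbc : F.Adj b c) (hac : a ≠ c) (had : a ≠ d) (hbd : b ≠ d) :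
    ¬ F.Adj c d := by
  intro hcd
  rcases hC.mem_or_mem hab with hp | hp <;> rcases hC.mem_or_mem hcd with hq | hq
  · exact hac (congrArg Subtype.val (hC.eq_of_reachable
      (hab.coe.reachable.trans hbc.coe.reachable) hp hq))
  · exact had (congrArg Subtype.val (hC.eq_of_reachable
      (hab.coe.reachable.trans (hbc.coe.reachable.trans hcd.coe.reachable)) hp hq))
  · exact hbc.ne (congrArg Subtype.val (hC.eq_of_reachable hbc.coe.reachable hp hq))
  · exact hbd (congrArg Subtype.val (hC.eq_of_reachable
      (hbc.coe.reachable.trans hcd.coe.reachable) hp hq))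

end SimpleGraph.Subgraph

lemma exists_forall_not_adj_inr {α ι κ : Type*} [Fintype α] [Fintype ι]
    {G : SimpleGraph (α ⊕ ι × κ)} (F : G.Subgraph) (hcard : Fintype.card α < Fintype.card ι)
    (huniq : ∀ a ⦃u w⦄, F.Adj (.inl a) u → F.Adj (.inl a) w → u = w) :
    ∃ i, ∀ a k, ¬ F.Adj (.inl a) (.inr (i, k)) := by
  by_contra! h
  choose g k hk using h
  obtain ⟨i, i', hne, hg⟩ := Fintype.exists_ne_map_eq_of_card_lt g hcard
  exact hne (congrArg Prod.fst (Sum.inr_injective (huniq _ (hk i) (hg ▸ hk i'))))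

lemma containsSub_K4_of_adj {V : Type*} {G : SimpleGraph V} (f : Fin 4 → V)
    (h : ∀ ⦃m n⦄, m < n → G.Adj (f m) (f n)) : ContainsSub K4 G := by
  have hf : Pairwise fun m n => G.Adj (f m) (f n) := fun m n hne =>
    hne.lt_or_gt.elim (fun hlt => h hlt) fun hlt => (h hlt).symm
  exact ⟨⟨f, fun _ _ hmn => by_contra fun hne => (hf hne).ne hmn⟩, fun _ _ hmn => hf hmn⟩

lemma GA_adj_inl_inl : GA.Adj (.inl 0) (.inl 1) := by
  simp [GA]

lemma GA_adj_inl_inr (v : Fin 2) (p : Fin 3 × Fin 4) : GA.Adj (.inl v) (.inr p) := by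
  fin_cases v <;> simp [GA] <;> exact ⟨p.1, p.2, rfl⟩

lemma GA_adj_path (i j : Fin 3) : GA.Adj (.inr (i, j.castSucc)) (.inr (i, j.succ)) := by
  simp [GA, Fin.castSucc_lt_succ.ne]

lemma GA_exists_not_adj_path {F : GA.Subgraph} {C : Set (Fin 2 ⊕ Fin 3 × Fin 4)}
    (hC : F.IsCenterSet C) (i : Fin 3) :
    ∃ j : Fin 3, ¬ F.Adj (.inr (i, j.castSucc)) (.inr (i, j.succ)) := by
  by_contra! h
  exact hC.not_adj_of_adj_of_adj (h 0) (h 1) (by simp) (by simp) (by simp) (h 2)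

/-- Let `F` be a subgraph of `A` admitting a set `C` of vertices avoiding `x` and `y`,
meeting each connected component of `F` in exactly one vertex, and such that every edge
of `F` is incident with a vertex of `C` (a choice of centers of a star forest avoiding
`x` and `y`).  Then `A − E(F)` contains a subgraph isomorphic to `K4`. -/
theorem statement6 (F : GA.Subgraph) (C : Set (Sum (Fin 2) (Fin 3 × Fin 4)))
    (hx : Sum.inl 0 ∉ C) (hy : Sum.inl 1 ∉ C)
    (hmeet : ∀ K : F.coe.ConnectedComponent,
      ∃! v : F.verts, F.coe.connectedComponentMk v = K ∧ (v : Sum (Fin 2) (Fin 3 × Fin 4)) ∈ C)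
    (hcov : ∀ ⦃p q⦄, F.Adj p q → p ∈ C ∨ q ∈ C) :
    ContainsSub K4 (GA \ F.spanningCoe) := by
  have hC : F.IsCenterSet C := ⟨hmeet, hcov⟩
  obtain ⟨i, hi⟩ := exists_forall_not_adj_inr F (by simp) fun v =>
    hC.eq_of_adj_of_adj (by fin_cases v <;> assumption)
  obtain ⟨j, hj⟩ := GA_exists_not_adj_path hC i
  refine containsSub_K4_of_adj ![.inl 0, .inl 1, .inr (i, j.castSucc), .inr (i, j.succ)] ?_
  intro m n hmn
  simp only [sdiff_adj, Subgraph.spanningCoe_adj]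
  fin_cases m <;> fin_cases n <;> try exact absurd hmn (by decide)
  · exact ⟨GA_adj_inl_inl, fun h => (hcov h).elim hx hy⟩
  all_goals first
    | exact ⟨GA_adj_inl_inr _ _, hi _ _⟩
    | exact ⟨GA_adj_path i j, hj⟩
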